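/- arXiv:2201.08366 — 7 statements merged into one kernel-verified Lean document; each statement's English description precedes it below -/
import Mathlib

section
/- Let (Ω, 𝓕, P) be a standard Borel probability space, let B = (B₀, B₁) : Ω → ℝ², W : Ω → ℝ and X : Ω → ℝ^d be measurable, and suppose B and W are conditionally independent given the σ-algebra σ(X). Set Y = B₀ + B₁·W and let κ denote the conditional distribution (regular conditional probability) of B given X, i.e. κ is a Markov kernel from ℝ^d to ℝ² with P((B ∈ A) | σ(X))(ω) = κ(X(ω))(A) a.s. for each Borel set A. Then for every t ∈ ℝ, P-almost surely, E[exp(i t Y) | σ(X) ⊔ σ(W)](ω) = φ_{κ(X(ω))}(t, t·W(ω)), where φ_μ denotes the characteristic function of the probability measure μ on ℝ². -/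
/-!
Conditional independence of `B` and `W` given `X` says that the conditional law of `B` given
`(X, W)` is its conditional law given `X` alone, and the latter is `κ ∘ X` because `κ` reproduces
the conditional probabilities of `B` given `X`. Since `exp (i t Y)` is a bounded continuous
function of `((X, W), B)`, its conditional expectation given `(X, W)` is the integral of
`b ↦ exp (i t (b₀ + W b₁))` against that conditional law.
-/

open MeasureTheory ProbabilityTheory Set

namespace ProbabilityTheory

variable {Ω β γ : Type*} {mΩ : MeasurableSpace Ω} {mβ : MeasurableSpace β}
  {mγ : MeasurableSpace γ} [StandardBorelSpace γ] [Nonempty γ]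
  {μ : Measure Ω} [IsFiniteMeasure μ] {X : Ω → β} {Y : Ω → γ}

theorem condDistrib_ae_eq_of_condExp_indicator_ae_eq (hX : Measurable X) (hY : Measurable Y)
    {κ : Kernel β γ} [IsFiniteKernel κ]
    (hκ : ∀ A : Set γ, MeasurableSet A →
      μ[(Y ⁻¹' A).indicator (fun _ => (1 : ℝ)) | mβ.comap X] =ᵐ[μ] fun ω => (κ (X ω) A).toReal) :
    condDistrib Y X μ =ᵐ[μ.map X] κ := by
  refine condDistrib_ae_eq_of_measure_eq_compProd X hY.aemeasurable
    (Measure.ext_prod fun {S A} hS hA => ?_)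
  have h_ae : ∀ᵐ ω ∂μ, condDistrib Y X μ (X ω) A = κ (X ω) A := by
    filter_upwards [condDistrib_ae_eq_condExp hX hY hA, hκ A hA] with ω hcond hκω
    rw [← ENNReal.toReal_eq_toReal_iff' (measure_ne_top _ _) (measure_ne_top _ _)]
    exact hcond.trans hκω
  rw [Measure.map_apply (hX.prodMk hY) (hS.prod hA), mk_preimage_prod,
    Measure.compProd_apply_prod hS hA, setLIntegral_map hS (κ.measurable_coe hA) hX,
    ← setLIntegral_preimage_condDistrib hX hY.aemeasurable hA hS]
  exact setLIntegral_congr_fun_ae (hX hS) (h_ae.mono fun ω h _ => h)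

variable [StandardBorelSpace Ω] {β' F : Type*} {mβ' : MeasurableSpace β'}
  [StandardBorelSpace β'] [Nonempty β'] [NormedAddCommGroup F] [NormedSpace ℝ F] [CompleteSpace F]

theorem condExp_sup_ae_eq_integral_condDistrib_of_condIndepFun
    {W : Ω → β'} (hX : Measurable X) (hW : Measurable W) (hY : Measurable Y)
    (hCI : CondIndepFun (mβ.comap X) hX.comap_le Y W μ)
    {f : (β × β') × γ → F} (hf : StronglyMeasurable f)
    (hf_int : Integrable (fun ω => f ((X ω, W ω), Y ω)) μ) :
    μ[fun ω => f ((X ω, W ω), Y ω) | mβ.comap X ⊔ mβ'.comap W]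
      =ᵐ[μ] fun ω => ∫ y, f ((X ω, W ω), y) ∂condDistrib Y X μ (X ω) := by
  have hXW : Measurable fun ω => (X ω, W ω) := hX.prodMk hW
  have h_condDistrib :=
    (condIndepFun_iff_condDistrib_prod_ae_eq_prodMkRight hY hW hX).mp hCI.symm
  rw [← MeasurableSpace.comap_prodMk]
  filter_upwards [condExp_prod_ae_eq_integral_condDistrib hXW hY.aemeasurable hf hf_int,
    ae_of_ae_map hXW.aemeasurable h_condDistrib] with ω h_condExp h_eq
  rw [Kernel.prodMkRight_apply] at h_eq
  rw [← h_eq]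
  exact h_condExp

end ProbabilityTheory

theorem stmt_1_general
    {Ω : Type*} [MeasurableSpace Ω] [StandardBorelSpace Ω]
    {P : Measure Ω} [IsProbabilityMeasure P] {d : ℕ}
    {B : Ω → ℝ × ℝ} {W : Ω → ℝ} {X : Ω → (Fin d → ℝ)}
    (hB : Measurable B) (hW : Measurable W) (hX : Measurable X)
    (hCI : CondIndepFun (MeasurableSpace.comap X inferInstance) hX.comap_le B W P)
    (Y : Ω → ℝ) (hY : ∀ ω, Y ω = (B ω).1 + (B ω).2 * W ω)
    (κ : Kernel (Fin d → ℝ) (ℝ × ℝ)) [IsMarkovKernel κ]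
    (hκ : ∀ A : Set (ℝ × ℝ), MeasurableSet A →
      (P[(B ⁻¹' A).indicator (fun _ => (1 : ℝ)) | MeasurableSpace.comap X inferInstance])
        =ᵐ[P] fun ω => (κ (X ω) A).toReal)
    (t : ℝ) :
    P[(fun ω => Complex.exp (Complex.I * ((t * Y ω : ℝ) : ℂ))) |
        MeasurableSpace.comap X inferInstance ⊔ MeasurableSpace.comap W inferInstance]
      =ᵐ[P]
    fun ω => ∫ b : ℝ × ℝ,
        Complex.exp (Complex.I * ((t * b.1 + (t * W ω) * b.2 : ℝ) : ℂ)) ∂(κ (X ω)) := by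
  set f : ((Fin d → ℝ) × ℝ) × (ℝ × ℝ) → ℂ :=
    fun p => Complex.exp (Complex.I * ((t * p.2.1 + (t * p.1.2) * p.2.2 : ℝ) : ℂ))
  have hf : Continuous f := by fun_prop
  have hY_eq : (fun ω => Complex.exp (Complex.I * ((t * Y ω : ℝ) : ℂ)))
      = fun ω => f ((X ω, W ω), B ω) := by
    funext ω
    simp only [f, hY ω]
    ring_nf
  have hf_int : Integrable (fun ω => f ((X ω, W ω), B ω)) P :=
    .of_bound (hf.comp_aestronglyMeasurable (by fun_prop)) 1
      (ae_of_all _ fun _ => (Complex.norm_exp_I_mul_ofReal _).le)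
  rw [hY_eq]
  filter_upwards [condExp_sup_ae_eq_integral_condDistrib_of_condIndepFun hX hW hB hCI
      hf.stronglyMeasurable hf_int,
    ae_of_ae_map hX.aemeasurable (condDistrib_ae_eq_of_condExp_indicator_ae_eq hX hB hκ)]
    with ω h_condExp h_κ
  rw [h_condExp, h_κ]

/-- Conditional characteristic function identity for the random coefficient model
`Y = B₀ + B₁ · W` under conditional independence of `B` and `W` given `σ(X)`:
`E[exp(i t Y) | σ(X) ⊔ σ(W)](ω) = φ_{κ(X(ω))}(t, t · W(ω))` a.s., where `κ` is the
conditional distribution of `B` given `X`. -/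
theorem stmt_1
    {Ω : Type*} [MeasurableSpace Ω] [StandardBorelSpace Ω] [Nonempty Ω]
    {P : Measure Ω} [IsProbabilityMeasure P] {d : ℕ}
    {B : Ω → ℝ × ℝ} {W : Ω → ℝ} {X : Ω → (Fin d → ℝ)}
    (hB : Measurable B) (hW : Measurable W) (hX : Measurable X)
    (hCI : CondIndepFun (MeasurableSpace.comap X inferInstance) hX.comap_le B W P)
    (Y : Ω → ℝ) (hY : ∀ ω, Y ω = (B ω).1 + (B ω).2 * W ω)
    (κ : Kernel (Fin d → ℝ) (ℝ × ℝ)) [IsMarkovKernel κ]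
    (hκ : ∀ A : Set (ℝ × ℝ), MeasurableSet A →
      (P[(B ⁻¹' A).indicator (fun _ => (1 : ℝ)) | MeasurableSpace.comap X inferInstance])
        =ᵐ[P] fun ω => (κ (X ω) A).toReal)
    (t : ℝ) :
    P[(fun ω => Complex.exp (Complex.I * ((t * Y ω : ℝ) : ℂ))) |
        MeasurableSpace.comap X inferInstance ⊔ MeasurableSpace.comap W inferInstance]
      =ᵐ[P]
    fun ω => ∫ b : ℝ × ℝ,
        Complex.exp (Complex.I * ((t * b.1 + (t * W ω) * b.2 : ℝ) : ℂ)) ∂(κ (X ω)) :=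
  stmt_1_general hB hW hX hCI Y hY κ hκ t
end

section
/- Let (B, W) and (B̃, W̃) be pairs of random variables (possibly on different probability spaces) with B = (B₀, B₁) and B̃ = (B̃₀, B̃₁) taking values in ℝ² and W, W̃ taking values in ℝ. Assume: (i) B is independent of W and B̃ is independent of W̃; (ii) the law of W equals the law of W̃ and has full support, i.e. assigns positive measure to every nonempty open subset of ℝ; (iii) the joint law of (B₀ + B₁·W, W) equals the joint law of (B̃₀ + B̃₁·W̃, W̃). Then the law of B equals the law of B̃. -/
open MeasureTheory ProbabilityTheory

/-!
By independence, the joint law of `(B₀ + B₁ W, W)` is the composition-product of the law of `W`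
with the kernel `w ↦ law of B₀ + B₁ w`. Kernels are determined almost everywhere by their
composition-product, so the laws of `B₀ + B₁ w` and `B'₀ + B'₁ w` agree for almost every `w`,
hence, by full support, for a dense set of `w`. This makes the characteristic functions of the
laws of `B` and `B'` agree at `(t, t w)` for those `w`; by continuity they agree everywhere.
-/

@[fun_prop]
lemma continuous_charFunDual {E : Type*} [NormedAddCommGroup E] [NormedSpace ℝ E]
    [MeasurableSpace E] [OpensMeasurableSpace E] (μ : Measure E) [IsFiniteMeasure μ] :
    Continuous (charFunDual μ) := by
  change Continuous fun L : StrongDual ℝ E ↦ ∫ v, Complex.exp (L v * Complex.I) ∂μ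
  refine continuous_of_dominated (bound := fun _ ↦ 1) (fun L ↦ ?_)
    (fun L ↦ ae_of_all _ fun v ↦ (Complex.norm_exp_ofReal_mul_I (L v)).le) (integrable_const 1)
    (ae_of_all _ fun v ↦ by fun_prop)
  exact Measurable.aestronglyMeasurable (by fun_prop)

noncomputable def pairDual (s u : ℝ) : StrongDual ℝ (ℝ × ℝ) :=
  s • ContinuousLinearMap.fst ℝ ℝ ℝ + u • ContinuousLinearMap.snd ℝ ℝ ℝ

@[simp]
lemma pairDual_apply (s u : ℝ) (b : ℝ × ℝ) : pairDual s u b = s * b.1 + u * b.2 := rfl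

@[fun_prop]
lemma Continuous.pairDual {X : Type*} [TopologicalSpace X] {f g : X → ℝ} (hf : Continuous f)
    (hg : Continuous g) : Continuous fun x ↦ pairDual (f x) (g x) := by
  unfold _root_.pairDual; fun_prop

lemma pairDual_apply_one_zero_apply_zero_one (L : StrongDual ℝ (ℝ × ℝ)) :
    pairDual (L (1, 0)) (L (0, 1)) = L := by
  ext <;> simp

lemma smul_pairDual_one (t w : ℝ) : t • pairDual 1 w = pairDual t (t * w) := by
  ext <;> simp

lemma charFunDual_pairDual_eq_charFun_map (μ : Measure (ℝ × ℝ)) (t w : ℝ) :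
    charFunDual μ (pairDual t (t * w)) = charFun (μ.map fun b ↦ b.1 + b.2 * w) t := by
  have hw : (fun b : ℝ × ℝ ↦ b.1 + b.2 * w) = pairDual 1 w := by
    ext b; simp [mul_comm]
  rw [hw, charFun_map_eq_charFunDual_smul, smul_pairDual_one]

lemma MeasureTheory.Measure.ext_of_map_add_mul_eq {μ μ' : Measure (ℝ × ℝ)} [IsFiniteMeasure μ]
    [IsFiniteMeasure μ'] {D : Set ℝ} (hD : Dense D)
    (h : ∀ w ∈ D, μ.map (fun b ↦ b.1 + b.2 * w) = μ'.map (fun b ↦ b.1 + b.2 * w)) :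
    μ = μ' := by
  have hline (t : ℝ) :
      (fun w ↦ charFunDual μ (pairDual t (t * w))) = fun w ↦ charFunDual μ' (pairDual t (t * w)) :=
    Continuous.ext_on hD (by fun_prop) (by fun_prop) fun w hw ↦ by
      simp only [charFunDual_pairDual_eq_charFun_map, h w hw]
  have hplane : (fun q : ℝ × ℝ ↦ charFunDual μ (pairDual q.1 q.2))
      = fun q ↦ charFunDual μ' (pairDual q.1 q.2) := by
    refine Continuous.ext_on ((dense_compl_singleton (0 : ℝ)).preimage (isOpenMap_fst (Y := ℝ)))
      (by fun_prop) (by fun_prop) fun q (hq : q.1 ≠ 0) ↦ ?_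
    simpa only [mul_div_cancel₀ q.2 hq] using congrFun (hline q.1) (q.2 / q.1)
  refine Measure.ext_of_charFunDual (funext fun L ↦ ?_)
  simpa only [pairDual_apply_one_zero_apply_zero_one] using congrFun hplane (L (1, 0), L (0, 1))

section Slice

variable {α β γ : Type*} [MeasurableSpace α] [MeasurableSpace β] [MeasurableSpace γ]

/-- For `A ⊥ W` with `A ∼ μ`, this is the conditional law of `g (A, W)` given `W = w`. -/
noncomputable def sliceKernel (μ : Measure α) (g : α × β → γ) : Kernel β γ :=
  (Kernel.const β μ ×ₖ Kernel.id).map g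

lemma sliceKernel_apply (μ : Measure α) [SFinite μ] {g : α × β → γ} (hg : Measurable g) (w : β) :
    sliceKernel μ g w = μ.map fun a ↦ g (a, w) := by
  rw [sliceKernel, Kernel.map_apply _ hg, Kernel.prod_apply, Kernel.const_apply, Kernel.id_apply,
    Measure.prod_dirac, Measure.map_map hg measurable_prodMk_right]
  rfl

instance (μ : Measure α) [SFinite μ] (g : α × β → γ) : IsSFiniteKernel (sliceKernel μ g) := by
  unfold sliceKernel; infer_instance

instance (μ : Measure α) [IsFiniteMeasure μ] (g : α × β → γ) :
    IsFiniteKernel (sliceKernel μ g) := by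
  unfold sliceKernel; infer_instance

lemma compProd_sliceKernel (μ : Measure α) (ν : Measure β) [SFinite μ] [SFinite ν]
    {g : α × β → γ} (hg : Measurable g) :
    ν ⊗ₘ sliceKernel μ g = ((μ.prod ν).map fun p ↦ (g p, p.2)).map Prod.swap := by
  ext s hs
  rw [Measure.map_map measurable_swap (by fun_prop), Measure.compProd_apply hs,
    Measure.map_apply (by fun_prop) hs, Measure.prod_apply_symm ((by fun_prop : Measurable _) hs)]
  refine lintegral_congr fun w ↦ ?_
  rw [sliceKernel_apply μ hg, Measure.map_apply (by fun_prop) (measurable_prodMk_left hs)]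
  rfl

lemma ae_map_eq_of_map_prod_eq [MeasurableSpace.CountableOrCountablyGenerated β γ]
    {μ μ' : Measure α} [IsFiniteMeasure μ] [IsFiniteMeasure μ'] {ν : Measure β} [IsFiniteMeasure ν]
    {g : α × β → γ} (hg : Measurable g)
    (h : (μ.prod ν).map (fun p ↦ (g p, p.2)) = (μ'.prod ν).map fun p ↦ (g p, p.2)) :
    ∀ᵐ w ∂ν, μ.map (fun a ↦ g (a, w)) = μ'.map fun a ↦ g (a, w) := by
  have hcomp : ν ⊗ₘ sliceKernel μ g = ν ⊗ₘ sliceKernel μ' g := by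
    rw [compProd_sliceKernel μ ν hg, compProd_sliceKernel μ' ν hg, h]
  filter_upwards [Kernel.ae_eq_of_compProd_eq hcomp] with w hw
  rwa [sliceKernel_apply μ hg, sliceKernel_apply μ' hg] at hw

end Slice

/-- Identification of the law of the random coefficients: if `B ⊥ W`, `B' ⊥ W'`, the laws of
`W` and `W'` coincide and have full support, and the joint laws of `(B₀ + B₁·W, W)` and
`(B'₀ + B'₁·W', W')` coincide, then the laws of `B` and `B'` coincide. -/
theorem stmt_3
    {Ω Ω' : Type*} [MeasurableSpace Ω] [MeasurableSpace Ω']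
    {P : Measure Ω} {P' : Measure Ω'} [IsProbabilityMeasure P] [IsProbabilityMeasure P']
    {B : Ω → ℝ × ℝ} {W : Ω → ℝ} {B' : Ω' → ℝ × ℝ} {W' : Ω' → ℝ}
    (hB : Measurable B) (hW : Measurable W) (hB' : Measurable B') (hW' : Measurable W')
    (hindep : IndepFun B W P) (hindep' : IndepFun B' W' P')
    (hlawW : P.map W = P'.map W')
    (hsupp : ∀ U : Set ℝ, IsOpen U → U.Nonempty → 0 < P.map W U)
    (hjoint : P.map (fun ω => ((B ω).1 + (B ω).2 * W ω, W ω))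
            = P'.map (fun ω => ((B' ω).1 + (B' ω).2 * W' ω, W' ω))) :
    P.map B = P'.map B' := by
  have : (P.map W).IsOpenPosMeasure := ⟨fun U hU hne ↦ (hsupp U hU hne).ne'⟩
  have hG : Measurable fun p : (ℝ × ℝ) × ℝ ↦ (p.1.1 + p.1.2 * p.2, p.2) := by fun_prop
  have hjoint_prod : ((P.map B).prod (P.map W)).map (fun p ↦ (p.1.1 + p.1.2 * p.2, p.2))
      = ((P'.map B').prod (P.map W)).map (fun p ↦ (p.1.1 + p.1.2 * p.2, p.2)) := by
    rw [← hindep.map_prod_eq_prod_map_map hB.aemeasurable hW.aemeasurable, hlawW,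
      ← hindep'.map_prod_eq_prod_map_map hB'.aemeasurable hW'.aemeasurable,
      Measure.map_map hG (hB.prodMk hW), Measure.map_map hG (hB'.prodMk hW')]
    exact hjoint
  exact Measure.ext_of_map_add_mul_eq (Measure.dense_of_ae
    (ae_map_eq_of_map_prod_eq (g := fun p : (ℝ × ℝ) × ℝ ↦ p.1.1 + p.1.2 * p.2) (by fun_prop)
      hjoint_prod)) fun _ h ↦ h
end

section
/- Let f : ℝ² → ℝ be continuous and Lebesgue integrable, and let φ(s) = ∫_{ℝ²} exp(i(s₁ a₁ + s₂ a₂)) f(a) da denote its Fourier transform. Assume φ is Lebesgue integrable on ℝ². Then for every b = (b₁, b₂) ∈ ℝ²: f(b) = (2π)^{-2} ∫_ℝ ∫_ℝ |t| · exp(-i(t b₁ + t w b₂)) · φ(t, t w) dw dt. -/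
/-!
Up to the substitution `s = -2π w` and the identification `EuclideanSpace ℝ (Fin 2) ≃ ℝ × ℝ`,
the paper's Fourier transform is Mathlib's, so ordinary Fourier inversion gives
`f b = (2π)⁻² ∫ exp(-i⟨s, b⟩) φ(s) ds`. Writing the plane integral as an iterated one and
substituting `s₂ = t w` in the inner integral (for `t ≠ 0`, i.e. almost every `t`) produces the
Jacobian `|t|`.
-/

open MeasureTheory FourierTransform Real
open scoped RealInnerProductSpace

noncomputable section

def planeFourier (g : ℝ × ℝ → ℂ) (s : ℝ × ℝ) : ℂ :=
  ∫ a : ℝ × ℝ, Complex.exp (Complex.I * ((s.1 * a.1 + s.2 * a.2 : ℝ) : ℂ)) * g a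

def euclideanPlaneEquiv : EuclideanSpace ℝ (Fin 2) ≃ᵐ ℝ × ℝ :=
  (MeasurableEquiv.toLp 2 (Fin 2 → ℝ)).symm.trans MeasurableEquiv.finTwoArrow

@[simp]
lemma euclideanPlaneEquiv_apply (v : EuclideanSpace ℝ (Fin 2)) :
    euclideanPlaneEquiv v = (v 0, v 1) :=
  rfl

lemma measurePreserving_euclideanPlaneEquiv : MeasurePreserving euclideanPlaneEquiv :=
  (volume_preserving_finTwoArrow ℝ).comp
    (EuclideanSpace.volume_preserving_symm_measurableEquiv_toLp (Fin 2))

lemma continuous_euclideanPlaneEquiv : Continuous euclideanPlaneEquiv := by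
  simp only [funext euclideanPlaneEquiv_apply]
  fun_prop

lemma EuclideanSpace.inner_fin_two (v w : EuclideanSpace ℝ (Fin 2)) :
    ⟪v, w⟫ = v 0 * w 0 + v 1 * w 1 := by
  simp only [PiLp.inner_apply, RCLike.inner_apply, conj_trivial, Fin.sum_univ_two]
  ring

lemma fourier_comp_euclideanPlaneEquiv (g : ℝ × ℝ → ℂ) (w : EuclideanSpace ℝ (Fin 2)) :
    𝓕 (g ∘ euclideanPlaneEquiv) w = planeFourier g (euclideanPlaneEquiv ((-(2 * π)) • w)) := by
  rw [Real.fourier_eq', planeFourier,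
    ← measurePreserving_euclideanPlaneEquiv.integral_comp euclideanPlaneEquiv.measurableEmbedding]
  congr 1 with v
  simp only [Function.comp_apply, euclideanPlaneEquiv_apply, smul_eq_mul, PiLp.smul_apply,
    EuclideanSpace.inner_fin_two]
  congr 2
  push_cast
  ring

lemma integrable_fourier_comp_euclideanPlaneEquiv {g : ℝ × ℝ → ℂ}
    (hg : Integrable (planeFourier g)) : Integrable (𝓕 (g ∘ euclideanPlaneEquiv)) := by
  rw [funext (fourier_comp_euclideanPlaneEquiv g)]
  refine Integrable.comp_smul (f := planeFourier g ∘ euclideanPlaneEquiv) ?_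
    (neg_ne_zero.mpr (by positivity))
  exact (measurePreserving_euclideanPlaneEquiv.integrable_comp_emb
    euclideanPlaneEquiv.measurableEmbedding).mpr hg

theorem planeFourier_inversion {g : ℝ × ℝ → ℂ} (hg : Continuous g) (hg_int : Integrable g)
    (hFg_int : Integrable (planeFourier g)) (b : ℝ × ℝ) :
    g b = ((2 * π) ^ 2)⁻¹ •
      ∫ s : ℝ × ℝ, Complex.exp (-(Complex.I * ((s.1 * b.1 + s.2 * b.2 : ℝ) : ℂ))) *
        planeFourier g s := by
  set e := euclideanPlaneEquiv
  have he : MeasurePreserving e := measurePreserving_euclideanPlaneEquiv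
  have hinv : 𝓕⁻ (𝓕 (g ∘ e)) = g ∘ e :=
    (hg.comp continuous_euclideanPlaneEquiv).fourierInv_fourier_eq
      ((he.integrable_comp_emb e.measurableEmbedding).mpr hg_int)
      (integrable_fourier_comp_euclideanPlaneEquiv hFg_int)
  set bV : EuclideanSpace ℝ (Fin 2) := WithLp.toLp 2 ![b.1, b.2]
  have hb : g b = 𝓕⁻ (𝓕 (g ∘ e)) bV := by rw [hinv]; rfl
  set H : ℝ × ℝ → ℂ := fun s ↦
    Complex.exp (-(Complex.I * ((s.1 * b.1 + s.2 * b.2 : ℝ) : ℂ))) * planeFourier g s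
  have hphase : ∀ v : EuclideanSpace ℝ (Fin 2),
      Complex.exp (((2 * π * ⟪v, bV⟫ : ℝ) : ℂ) * Complex.I) • 𝓕 (g ∘ e) v =
        H (e ((-(2 * π)) • v)) := by
    intro v
    rw [fourier_comp_euclideanPlaneEquiv, smul_eq_mul]
    congr 2
    simp only [e, bV, euclideanPlaneEquiv_apply, PiLp.smul_apply, smul_eq_mul,
      EuclideanSpace.inner_fin_two, Matrix.cons_val_zero, Matrix.cons_val_one]
    push_cast
    ring
  rw [hb, Real.fourierInv_eq', integral_congr_ae (.of_forall hphase),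
    Measure.integral_comp_smul volume (fun v ↦ H (e v)), he.integral_comp',
    finrank_euclideanSpace_fin, abs_inv, abs_pow, abs_neg, abs_of_pos (by positivity)]

theorem integral_prod_eq_integral_cone {E : Type*} [NormedAddCommGroup E] [NormedSpace ℝ E]
    {G : ℝ × ℝ → E} (hG : Integrable G) :
    ∫ s : ℝ × ℝ, G s = ∫ t : ℝ, ∫ w : ℝ, |t| • G (t, t * w) := by
  rw [Measure.volume_eq_prod, integral_prod G (by rwa [← Measure.volume_eq_prod])]
  refine integral_congr_ae ?_
  filter_upwards [(Measure.ae_ne volume 0 : ∀ᵐ t : ℝ, t ≠ 0)] with t ht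
  rw [integral_smul, Measure.integral_comp_mul_left (fun y ↦ G (t, y)) t, smul_smul, abs_inv,
    mul_inv_cancel₀ (abs_ne_zero.mpr ht), one_smul]

/-- Fourier inversion on the cone `{(t, t·w)}`: for a continuous integrable `f : ℝ² → ℝ` with
integrable Fourier transform `φ`, one has
`f(b) = (2π)⁻² ∫ t, ∫ w, |t| exp(-i(t b₁ + t w b₂)) φ(t, t w) dw dt`. -/
theorem stmt_5 (f : ℝ × ℝ → ℝ) (hf_cont : Continuous f) (hf_int : Integrable f)
    (φ : ℝ × ℝ → ℂ)
    (hφ : ∀ s : ℝ × ℝ,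
      φ s = ∫ a : ℝ × ℝ, Complex.exp (Complex.I * ((s.1 * a.1 + s.2 * a.2 : ℝ) : ℂ)) * (f a : ℂ))
    (hφ_int : Integrable φ) :
    ∀ b : ℝ × ℝ, (f b : ℂ) =
      (((2 * Real.pi : ℝ) : ℂ)) ⁻¹ ^ 2 *
        ∫ t : ℝ, ∫ w : ℝ,
          (Complex.ofReal |t|) *
            Complex.exp (-(Complex.I * ((t * b.1 + (t * w) * b.2 : ℝ) : ℂ))) * φ (t, t * w) := by
  intro b
  obtain rfl : φ = planeFourier (fun a ↦ (f a : ℂ)) := funext hφ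
  have hmod_int : Integrable fun s : ℝ × ℝ ↦
      Complex.exp (-(Complex.I * ((s.1 * b.1 + s.2 * b.2 : ℝ) : ℂ))) *
        planeFourier (fun a ↦ (f a : ℂ)) s :=
    hφ_int.bdd_mul (c := 1) (by fun_prop) (.of_forall fun s ↦ by simp [Complex.norm_exp])
  refine (planeFourier_inversion (g := fun a ↦ (f a : ℂ)) (by fun_prop) hf_int.ofReal hφ_int
    b).trans ?_
  rw [integral_prod_eq_integral_cone hmod_int]
  simp only [Complex.real_smul, mul_assoc]
  push_cast
  ring
end
end

section
/- Let H be a real or complex Hilbert space, H' a normed space, F : H → H' a linear map, V ⊆ H a closed subspace, and f ∈ H with orthogonal projection P_V f of f onto V. Suppose there are constants τ > 0 and C ≥ 0 such that (i) ‖F v‖² ≥ τ·‖v‖² for all v ∈ V, and (ii) ‖F(f − P_V f)‖² ≤ C·τ·‖f − P_V f‖². Let f̃ ∈ V satisfy ‖F f̃ − F f‖ ≤ ‖F φ − F f‖ for all φ ∈ V (i.e. f̃ minimizes the criterion over V). Then ‖f̃ − f‖ ≤ (1 + 2√C)·‖f − P_V f‖. -/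
/-- Abstract bias bound for the sieve minimizer: if `F` is bounded below by `τ` on the closed
subspace `V`, the link condition `‖F(f − P_V f)‖² ≤ C τ ‖f − P_V f‖²` holds, and `f̃ ∈ V`
minimizes `‖F φ − F f‖` over `V`, then `‖f̃ − f‖ ≤ (1 + 2√C) ‖f − P_V f‖`. -/
theorem stmt_7 {𝕜 : Type*} [RCLike 𝕜]
    {H : Type*} [NormedAddCommGroup H] [InnerProductSpace 𝕜 H] [CompleteSpace H]
    {H' : Type*} [NormedAddCommGroup H'] [NormedSpace 𝕜 H']
    (F : H →ₗ[𝕜] H') (V : Submodule 𝕜 H) (hVc : IsClosed (V : Set H))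
    (f Pf : H) (hPf_mem : Pf ∈ V)
    (hPf_proj : ∀ v ∈ V, ‖f - Pf‖ ≤ ‖f - v‖)
    (τ C : ℝ) (hτ : 0 < τ) (hC : 0 ≤ C)
    (hlower : ∀ v ∈ V, τ * ‖v‖ ^ 2 ≤ ‖F v‖ ^ 2)
    (hlink : ‖F (f - Pf)‖ ^ 2 ≤ C * τ * ‖f - Pf‖ ^ 2)
    (ftil : H) (hftil_mem : ftil ∈ V)
    (hftil_min : ∀ φ ∈ V, ‖F ftil - F f‖ ≤ ‖F φ - F f‖) :
    ‖ftil - f‖ ≤ (1 + 2 * Real.sqrt C) * ‖f - Pf‖ := by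
  have hmem : ftil - Pf ∈ V := sub_mem hftil_mem hPf_mem
  have hmin := hftil_min Pf hPf_mem
  have hFd : ‖F Pf - F f‖ = ‖F (f - Pf)‖ := by
    rw [map_sub, norm_sub_rev]
  have h1 : ‖F (ftil - Pf)‖ ≤ 2 * ‖F (f - Pf)‖ := by
    have : ‖F (ftil - Pf)‖ ≤ ‖F ftil - F f‖ + ‖F f - F Pf‖ := by
      rw [map_sub]
      simpa using norm_sub_le_norm_sub_add_norm_sub (F ftil) (F f) (F Pf)
    calc ‖F (ftil - Pf)‖ ≤ ‖F ftil - F f‖ + ‖F f - F Pf‖ := this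
      _ ≤ ‖F Pf - F f‖ + ‖F f - F Pf‖ := by linarith
      _ = 2 * ‖F (f - Pf)‖ := by rw [norm_sub_rev (F f), hFd]; ring
  have h2 : τ * ‖ftil - Pf‖ ^ 2 ≤ 4 * (C * τ * ‖f - Pf‖ ^ 2) := by
    have := hlower _ hmem
    have hsq : ‖F (ftil - Pf)‖ ^ 2 ≤ 4 * ‖F (f - Pf)‖ ^ 2 := by
      nlinarith [norm_nonneg (F (ftil - Pf)), norm_nonneg (F (f - Pf))]
    nlinarith
  have h3 : ‖ftil - Pf‖ ^ 2 ≤ (2 * Real.sqrt C * ‖f - Pf‖) ^ 2 := by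
    have hs : Real.sqrt C ^ 2 = C := Real.sq_sqrt hC
    have : ‖ftil - Pf‖ ^ 2 ≤ 4 * C * ‖f - Pf‖ ^ 2 := by
      nlinarith
    nlinarith [Real.sqrt_nonneg C]
  have h4 : ‖ftil - Pf‖ ≤ 2 * Real.sqrt C * ‖f - Pf‖ := by
    have h0 : 0 ≤ 2 * Real.sqrt C * ‖f - Pf‖ :=
      mul_nonneg (mul_nonneg (by norm_num) (Real.sqrt_nonneg C)) (norm_nonneg _)
    nlinarith [norm_nonneg (ftil - Pf)]
  calc ‖ftil - f‖ ≤ ‖ftil - Pf‖ + ‖Pf - f‖ := norm_sub_le_norm_sub_add_norm_sub _ _ _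
    _ ≤ 2 * Real.sqrt C * ‖f - Pf‖ + ‖f - Pf‖ := by rw [norm_sub_rev Pf f]; linarith
    _ = (1 + 2 * Real.sqrt C) * ‖f - Pf‖ := by ring
end

section
/- Let f, g : ℝ² → ℝ be both Lebesgue integrable and square-integrable, with Fourier transforms φ_f(s) = ∫ exp(i⟨s,a⟩) f(a) da and φ_g(s) = ∫ exp(i⟨s,a⟩) g(a) da. Assume the function (t, w) ↦ |t| · φ_f(t, t w) · conj(φ_g(t, t w)) is integrable on ℝ². Then ∫_{ℝ²} f(b) g(b) db = (2π)^{-2} ∫_ℝ ∫_ℝ |t| · φ_f(t, t w) · conj(φ_g(t, t w)) dw dt. -/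
open MeasureTheory FourierTransform Real
open scoped RealInnerProductSpace ComplexConjugate Convolution

/-!
Write `H s = φf s * conj (φg s)`. On each line `t ≠ 0` the substitution `x = t w` turns
`∫ |t| H (t, t w) dw` into `∫ H (t, x) dx`, so by Fubini the iterated cone integral is `∫ H` over
the plane. The rescaling `s = -2π ξ` turns `φf, φg` into Mathlib's Fourier transforms, at the
cost of the factor `(2π)²`, and Plancherel's identity `∫ 𝓕u · conj 𝓕v = ∫ u · conj v` is Fourier
inversion at `0` for the correlation `x ↦ ∫ conj (v a) u (a + x)`, whose transform is
`𝓕u · conj 𝓕v`. The correlation is continuous, as required by the inversion theorem, because it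
is the `L²` pairing of `v` with the translates of `u`.
-/

section Correlation

variable {V : Type*} [NormedAddCommGroup V] [InnerProductSpace ℝ V] [MeasurableSpace V]
  [BorelSpace V] [FiniteDimensional ℝ V]

theorem MeasureTheory.Integrable.conj_comp_neg {v : V → ℂ} (hv : Integrable v) :
    Integrable fun x => conj (v (-x)) :=
  Complex.conjCLE.toContinuousLinearMap.integrable_comp hv.comp_neg

noncomputable def correlation (u v : V → ℂ) (x : V) : ℂ := ∫ a, conj (v a) * u (a + x)

theorem correlation_eq_convolution (u v : V → ℂ) :
    correlation u v = (fun x => conj (v (-x))) ⋆[ContinuousLinearMap.mul ℂ ℂ] u := by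
  ext x
  rw [convolution_mul, ← integral_neg_eq_self]
  simp [correlation, neg_neg, sub_neg_eq_add, add_comm]

theorem fourier_conj_comp_neg (v : V → ℂ) (ξ : V) :
    𝓕 (fun x => conj (v (-x))) ξ = conj (𝓕 v ξ) := by
  rw [fourier_eq, fourier_eq, ← integral_conj, ← integral_neg_eq_self]
  congr 1 with x
  simp [Circle.smul_def, ← Circle.coe_inv_eq_conj, AddChar.map_neg_eq_inv]

theorem MeasureTheory.Integrable.correlation {u v : V → ℂ} (hu : Integrable u)
    (hv : Integrable v) : Integrable (correlation u v) := by
  rw [correlation_eq_convolution]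
  exact hv.conj_comp_neg.integrable_convolution _ hu

theorem fourier_correlation {u v : V → ℂ} (hu : Integrable u) (hv : Integrable v) (ξ : V) :
    𝓕 (correlation u v) ξ = 𝓕 u ξ * conj (𝓕 v ξ) := by
  rw [correlation_eq_convolution, Real.fourier_mul_convolution_eq hv.conj_comp_neg hu,
    fourier_conj_comp_neg, mul_comm]

theorem MeasureTheory.MemLp.continuous_correlation {u v : V → ℂ} (hu : MemLp u 2)
    (hv : MemLp v 2) : Continuous (correlation u v) := by
  let shift : V → C(V, V) := fun x => ⟨(· + x), by fun_prop⟩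
  have hshift : Continuous shift :=
    ContinuousMap.continuous_of_continuous_uncurry _ (continuous_snd.add continuous_fst)
  have hmp : ∀ x, MeasurePreserving (shift x) volume volume :=
    fun x => measurePreserving_add_right volume x
  let T : V → Lp ℂ 2 (volume : Measure V) :=
    fun x => Lp.compMeasurePreserving (shift x) (hmp x) (hu.toLp u)
  have hT : Continuous T :=
    Continuous.compMeasurePreservingLp continuous_const hshift hmp (by norm_num)
  suffices correlation u v = fun x => inner ℂ (hv.toLp v) (T x) from
    this ▸ continuous_const.inner hT
  ext x
  rw [MeasureTheory.L2.inner_def]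
  refine integral_congr_ae ?_
  have hTx : T x =ᵐ[volume] fun a => u (a + x) :=
    (Lp.coeFn_compMeasurePreserving _ (hmp x)).trans
      ((hmp x).quasiMeasurePreserving.ae_eq_comp hu.coeFn_toLp)
  filter_upwards [hTx, hv.coeFn_toLp] with a hTa hva
  rw [hTa, hva, RCLike.inner_apply, mul_comm]

theorem integral_fourier_mul_conj_fourier {u v : V → ℂ} (hu1 : Integrable u)
    (hv1 : Integrable v) (hu2 : MemLp u 2) (hv2 : MemLp v 2)
    (h : Integrable fun ξ => 𝓕 u ξ * conj (𝓕 v ξ)) :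
    ∫ ξ, 𝓕 u ξ * conj (𝓕 v ξ) = ∫ x, u x * conj (v x) := by
  have hF : Integrable (𝓕 (correlation u v)) := by
    simpa only [funext (fourier_correlation hu1 hv1)] using h
  calc ∫ ξ, 𝓕 u ξ * conj (𝓕 v ξ) = 𝓕⁻ (𝓕 (correlation u v)) 0 := by
        simp [fourierInv_eq, fourier_correlation hu1 hv1]
    _ = correlation u v 0 :=
        (hu1.correlation hv1).fourierInv_fourier_eq hF
          (hu2.continuous_correlation hv2).continuousAt
    _ = ∫ x, u x * conj (v x) := by simp [correlation, mul_comm]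

end Correlation

section Cone

variable {E : Type*} [NormedAddCommGroup E] [NormedSpace ℝ E]

theorem integral_abs_smul_comp_mul_left (h : ℝ → E) {t : ℝ} (ht : t ≠ 0) :
    ∫ w, |t| • h (t * w) = ∫ x, h x := by
  rw [integral_smul, Measure.integral_comp_mul_left, smul_smul, abs_inv,
    mul_inv_cancel₀ (abs_ne_zero.mpr ht), one_smul]

theorem integrable_abs_smul_comp_mul_left_iff (h : ℝ → E) {t : ℝ} (ht : t ≠ 0) :
    Integrable (fun w => |t| • h (t * w)) ↔ Integrable h := by
  rw [← integrable_comp_mul_left_iff h ht]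
  exact integrable_smul_iff (abs_ne_zero.mpr ht) (fun w => h (t * w))

variable {H : ℝ × ℝ → E}

theorem MeasureTheory.Integrable.of_integrable_cone (hH : AEStronglyMeasurable H)
    (hcone : Integrable fun p : ℝ × ℝ => |p.1| • H (p.1, p.1 * p.2)) : Integrable H := by
  rw [Measure.volume_eq_prod] at hcone hH ⊢
  refine (integrable_prod_iff hH).2 ⟨?_, ?_⟩
  · filter_upwards [hcone.prod_right_ae, Measure.ae_ne volume 0] with t ht ht0
    exact (integrable_abs_smul_comp_mul_left_iff (fun x => H (t, x)) ht0).1 ht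
  · refine hcone.integral_norm_prod_left.congr ?_
    filter_upwards [Measure.ae_ne volume 0] with t ht0
    simpa only [norm_smul, Real.norm_eq_abs, abs_abs, smul_eq_mul] using
      integral_abs_smul_comp_mul_left (fun x => ‖H (t, x)‖) ht0

theorem integral_eq_integral_cone (hH : AEStronglyMeasurable H)
    (hcone : Integrable fun p : ℝ × ℝ => |p.1| • H (p.1, p.1 * p.2)) :
    ∫ p, H p = ∫ t, ∫ w, |t| • H (t, t * w) := by
  have hHint := hcone.of_integrable_cone hH
  rw [Measure.volume_eq_prod] at hHint
  rw [Measure.volume_eq_prod, integral_prod _ hHint]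
  refine integral_congr_ae ?_
  filter_upwards [Measure.ae_ne volume 0] with t ht0
  exact (integral_abs_smul_comp_mul_left (fun x => H (t, x)) ht0).symm

end Cone

section Plane

noncomputable def planeEquiv : EuclideanSpace ℝ (Fin 2) ≃L[ℝ] ℝ × ℝ :=
  (EuclideanSpace.equiv (Fin 2) ℝ).trans (ContinuousLinearEquiv.finTwoArrow ℝ ℝ)

theorem measurePreserving_planeEquiv : MeasurePreserving planeEquiv volume volume :=
  (volume_preserving_finTwoArrow ℝ).comp
    (EuclideanSpace.volume_preserving_symm_measurableEquiv_toLp (Fin 2))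

theorem measurePreserving_planeEquiv_symm : MeasurePreserving planeEquiv.symm volume volume :=
  measurePreserving_planeEquiv.symm planeEquiv.toHomeomorph.toMeasurableEquiv

theorem inner_planeEquiv_symm (p q : ℝ × ℝ) :
    ⟪planeEquiv.symm p, planeEquiv.symm q⟫ = p.1 * q.1 + p.2 * q.2 := by
  simp [planeEquiv, PiLp.inner_apply, Fin.sum_univ_two, mul_comm]

theorem integral_comp_planeEquiv {F : Type*} [NormedAddCommGroup F] [NormedSpace ℝ F]
    (f : ℝ × ℝ → F) : ∫ x, f (planeEquiv x) = ∫ p, f p :=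
  measurePreserving_planeEquiv.integral_comp planeEquiv.toHomeomorph.measurableEmbedding f

theorem MeasureTheory.Integrable.comp_planeEquiv {F : Type*} [NormedAddCommGroup F]
    {f : ℝ × ℝ → F} (hf : Integrable f) : Integrable (f ∘ planeEquiv) :=
  (measurePreserving_planeEquiv.integrable_comp hf.aestronglyMeasurable).2 hf

noncomputable def fourierPlane (f : ℝ × ℝ → ℂ) (s : ℝ × ℝ) : ℂ :=
  ∫ a : ℝ × ℝ, Complex.exp (Complex.I * ((s.1 * a.1 + s.2 * a.2 : ℝ) : ℂ)) * f a

theorem fourierPlane_eq_fourier (f : ℝ × ℝ → ℂ) (s : ℝ × ℝ) :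
    fourierPlane f s = 𝓕 (f ∘ planeEquiv) ((-(2 * π)⁻¹ : ℝ) • planeEquiv.symm s) := by
  rw [fourier_eq', fourierPlane, ← integral_comp_planeEquiv]
  congr 1 with x
  have h2π : (-2 * π) * (-(2 * π)⁻¹) = 1 := by field_simp
  rw [inner_smul_right, ← mul_assoc, h2π, one_mul, real_inner_comm,
    ← planeEquiv.symm_apply_apply x, inner_planeEquiv_symm, planeEquiv.symm_apply_apply,
    smul_eq_mul, mul_comm Complex.I]
  rfl

theorem continuous_fourierPlane {f : ℝ × ℝ → ℂ} (hf : Integrable f) :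
    Continuous (fourierPlane f) := by
  rw [funext (fourierPlane_eq_fourier f)]
  exact (VectorFourier.fourierIntegral_continuous continuous_fourierChar continuous_inner
    hf.comp_planeEquiv).comp (by fun_prop)

theorem integral_fourierPlane_mul_conj {f g : ℝ × ℝ → ℂ} (hf1 : Integrable f)
    (hg1 : Integrable g) (hf2 : MemLp f 2) (hg2 : MemLp g 2)
    (h : Integrable fun s => fourierPlane f s * conj (fourierPlane g s)) :
    ∫ s, fourierPlane f s * conj (fourierPlane g s) = (2 * π) ^ 2 * ∫ a, f a * conj (g a) := by
  set c : ℝ := -(2 * π)⁻¹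
  have hc : c ≠ 0 := by simp [c, pi_ne_zero]
  set Φ : EuclideanSpace ℝ (Fin 2) → ℂ :=
    fun ξ => 𝓕 (f ∘ planeEquiv) ξ * conj (𝓕 (g ∘ planeEquiv) ξ)
  have hΦc : ∀ s, fourierPlane f s * conj (fourierPlane g s) = Φ (c • planeEquiv.symm s) := by
    intro s
    rw [fourierPlane_eq_fourier, fourierPlane_eq_fourier]
  have hΦ : Integrable Φ := by
    rw [← integrable_comp_smul_iff volume Φ hc,
      ← measurePreserving_planeEquiv_symm.integrable_comp_emb
        planeEquiv.symm.toHomeomorph.measurableEmbedding]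
    simpa only [Function.comp_def, hΦc] using h
  calc ∫ s, fourierPlane f s * conj (fourierPlane g s)
      = ∫ x, Φ (c • x) := by
        simp only [hΦc, ← integral_comp_planeEquiv, ContinuousLinearEquiv.symm_apply_apply]
    _ = (2 * π) ^ 2 * ∫ ξ, Φ ξ := by
        rw [Measure.integral_comp_smul, finrank_euclideanSpace_fin, Complex.real_smul]
        congr 1
        simp [c, abs_of_pos pi_pos, mul_pow]
    _ = (2 * π) ^ 2 * ∫ a, f a * conj (g a) := by
        rw [integral_fourier_mul_conj_fourier hf1.comp_planeEquiv hg1.comp_planeEquiv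
          (hf2.comp_measurePreserving measurePreserving_planeEquiv)
          (hg2.comp_measurePreserving measurePreserving_planeEquiv) hΦ,
          ← integral_comp_planeEquiv]
        rfl

end Plane

/-- Parseval-type identity on the cone `{(t, t·w)}`: for `f, g ∈ L¹ ∩ L²(ℝ²)` with Fourier
transforms `φ_f, φ_g`, if `(t, w) ↦ |t| φ_f(t, tw) conj(φ_g(t, tw))` is integrable then
`∫ f g = (2π)⁻² ∫ t, ∫ w, |t| φ_f(t, tw) conj(φ_g(t, tw)) dw dt`. -/
theorem stmt_10 (f g : ℝ × ℝ → ℝ)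
    (hf1 : Integrable f) (hg1 : Integrable g)
    (hf2 : MemLp f 2 (volume : Measure (ℝ × ℝ)))
    (hg2 : MemLp g 2 (volume : Measure (ℝ × ℝ)))
    (φf φg : ℝ × ℝ → ℂ)
    (hφf : ∀ s : ℝ × ℝ,
      φf s = ∫ a : ℝ × ℝ, Complex.exp (Complex.I * ((s.1 * a.1 + s.2 * a.2 : ℝ) : ℂ)) * (f a : ℂ))
    (hφg : ∀ s : ℝ × ℝ,
      φg s = ∫ a : ℝ × ℝ, Complex.exp (Complex.I * ((s.1 * a.1 + s.2 * a.2 : ℝ) : ℂ)) * (g a : ℂ))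
    (hcone : Integrable (fun p : ℝ × ℝ =>
      (Complex.ofReal |p.1|) * φf (p.1, p.1 * p.2) * (starRingEnd ℂ) (φg (p.1, p.1 * p.2)))) :
    ((∫ b : ℝ × ℝ, f b * g b : ℝ) : ℂ) =
      (((2 * Real.pi : ℝ) : ℂ))⁻¹ ^ 2 *
        ∫ t : ℝ, ∫ w : ℝ,
          (Complex.ofReal |t|) * φf (t, t * w) * (starRingEnd ℂ) (φg (t, t * w)) := by
  set H : ℝ × ℝ → ℂ := fun s => φf s * conj (φg s)
  have hcone_eq : ∀ t w : ℝ,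
      (Complex.ofReal |t|) * φf (t, t * w) * (starRingEnd ℂ) (φg (t, t * w)) = |t| • H (t, t * w) :=
    fun t w => by rw [Complex.real_smul, mul_assoc]
  simp only [hcone_eq] at hcone ⊢
  obtain rfl : φf = fourierPlane fun a => (f a : ℂ) := funext hφf
  obtain rfl : φg = fourierPlane fun a => (g a : ℂ) := funext hφg
  have hH : AEStronglyMeasurable H :=
    ((continuous_fourierPlane hf1.ofReal).mul
      (Complex.continuous_conj.comp (continuous_fourierPlane hg1.ofReal))).aestronglyMeasurable
  have hparseval : ∫ s, H s = (2 * π) ^ 2 * ∫ a, (f a : ℂ) * conj (g a : ℂ) :=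
    integral_fourierPlane_mul_conj hf1.ofReal hg1.ofReal hf2.ofReal hg2.ofReal
      (hcone.of_integrable_cone hH)
  rw [← integral_eq_integral_cone hH hcone, hparseval, ← mul_assoc, ← integral_complex_ofReal]
  have hπ : (π : ℂ) ≠ 0 := Complex.ofReal_ne_zero.mpr pi_ne_zero
  simp only [Complex.ofReal_mul, Complex.ofReal_ofNat, Complex.conj_ofReal]
  field_simp
end

section
/- Let μ and ν be Borel probability measures on ℝ² such that all absolute moments are finite: ∫ ‖b‖^n dμ(b) < ∞ and ∫ ‖b‖^n dν(b) < ∞ for every n ∈ ℕ. Suppose the characteristic functions agree on the cone with bounded second slope, i.e. φ_μ(t, t w) = φ_ν(t, t w) for all t ∈ ℝ and all w ∈ [0, 1]. Then all mixed moments agree: for all j, k ∈ ℕ, ∫ b₀^j b₁^k dμ(b) = ∫ b₀^j b₁^k dν(b). -/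
/-!
For fixed `w`, the hypothesis says that the laws of `B₀ + w B₁` under `μ` and `ν` have the same
characteristic function, hence coincide, so `∫ (b₀ + w b₁)ⁿ` is the same for both measures
whenever `w ∈ [0, 1]`. By the binomial theorem this integral is a polynomial in `w` whose
coefficient of `wᵏ` is `(n choose k) ∫ b₀ⁿ⁻ᵏ b₁ᵏ`; two polynomials agreeing on the infinite set
`[0, 1]` are equal, and comparing coefficients gives the mixed moments.
-/

open MeasureTheory Polynomial Complex

lemma integrable_fst_pow_mul_snd_pow {μ : Measure (ℝ × ℝ)} {j k : ℕ}
    (hμ : Integrable (fun b : ℝ × ℝ => ‖b‖ ^ (j + k)) μ) :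
    Integrable (fun b : ℝ × ℝ => b.1 ^ j * b.2 ^ k) μ := by
  refine hμ.mono (by fun_prop) (.of_forall fun b => ?_)
  rw [norm_mul, norm_pow, norm_pow, norm_pow, norm_norm, pow_add]
  gcongr
  exacts [norm_fst_le b, norm_snd_le b]

noncomputable def mixedMomentPoly (μ : Measure (ℝ × ℝ)) (n : ℕ) : ℝ[X] :=
  ∑ m ∈ Finset.range (n + 1), C (n.choose m * ∫ b, b.1 ^ (n - m) * b.2 ^ m ∂μ) * X ^ m

lemma coeff_mixedMomentPoly (μ : Measure (ℝ × ℝ)) {n m : ℕ} (hm : m ≤ n) :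
    (mixedMomentPoly μ n).coeff m = n.choose m * ∫ b, b.1 ^ (n - m) * b.2 ^ m ∂μ := by
  simp only [mixedMomentPoly, finsetSum_coeff, coeff_C_mul_X_pow]
  rw [Finset.sum_ite_eq, if_pos (Finset.mem_range_succ_iff.mpr hm)]

lemma eval_mixedMomentPoly {μ : Measure (ℝ × ℝ)} {n : ℕ}
    (hμ : Integrable (fun b : ℝ × ℝ => ‖b‖ ^ n) μ) (w : ℝ) :
    (mixedMomentPoly μ n).eval w = ∫ b, (b.1 + w * b.2) ^ n ∂μ := by
  have hexpand (b : ℝ × ℝ) : (b.1 + w * b.2) ^ n = ∑ m ∈ Finset.range (n + 1),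
      (n.choose m * w ^ m) * (b.1 ^ (n - m) * b.2 ^ m) := by
    rw [add_comm, add_pow]
    refine Finset.sum_congr rfl fun m _ => ?_
    ring
  simp_rw [hexpand]
  have hterm (m : ℕ) (hm : m ∈ Finset.range (n + 1)) :
      Integrable (fun b : ℝ × ℝ => b.1 ^ (n - m) * b.2 ^ m) μ := by
    refine integrable_fst_pow_mul_snd_pow ?_
    rwa [Nat.sub_add_cancel (Finset.mem_range_succ_iff.mp hm)]
  rw [integral_finsetSum _ fun m hm => (hterm m hm).const_mul _]
  simp only [mixedMomentPoly, eval_finsetSum, eval_mul, eval_C, eval_X_pow, integral_const_mul]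
  refine Finset.sum_congr rfl fun m _ => ?_
  ring

lemma charFun_map_fst_add_mul_snd (μ : Measure (ℝ × ℝ)) (w t : ℝ) :
    charFun (μ.map fun b => b.1 + w * b.2) t
      = ∫ b, exp (I * ((t * b.1 + (t * w) * b.2 : ℝ) : ℂ)) ∂μ := by
  rw [charFun_apply_real, integral_map (by fun_prop) (by fun_prop)]
  congr 1 with b
  push_cast
  ring_nf

lemma map_fst_add_mul_snd_eq_of_charFun {μ ν : Measure (ℝ × ℝ)} [IsFiniteMeasure μ]
    [IsFiniteMeasure ν] {w : ℝ}
    (h : ∀ t : ℝ, ∫ b, exp (I * ((t * b.1 + (t * w) * b.2 : ℝ) : ℂ)) ∂μ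
      = ∫ b, exp (I * ((t * b.1 + (t * w) * b.2 : ℝ) : ℂ)) ∂ν) :
    μ.map (fun b => b.1 + w * b.2) = ν.map (fun b => b.1 + w * b.2) :=
  Measure.ext_of_charFun <| funext fun t => by
    rw [charFun_map_fst_add_mul_snd, charFun_map_fst_add_mul_snd, h]

/-- Moment matching from agreement of characteristic functions on the cone with slopes in
`[0,1]`: if two probability measures on `ℝ²` with all absolute moments finite satisfy
`φ_μ(t, tw) = φ_ν(t, tw)` for all `t ∈ ℝ` and `w ∈ [0,1]`, then all mixed moments agree. -/
theorem stmt_11 (μ ν : Measure (ℝ × ℝ)) [IsProbabilityMeasure μ] [IsProbabilityMeasure ν]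
    (hμm : ∀ n : ℕ, Integrable (fun b : ℝ × ℝ => ‖b‖ ^ n) μ)
    (hνm : ∀ n : ℕ, Integrable (fun b : ℝ × ℝ => ‖b‖ ^ n) ν)
    (h : ∀ t : ℝ, ∀ w ∈ Set.Icc (0 : ℝ) 1,
      ∫ b : ℝ × ℝ, Complex.exp (Complex.I * ((t * b.1 + (t * w) * b.2 : ℝ) : ℂ)) ∂μ
        = ∫ b : ℝ × ℝ, Complex.exp (Complex.I * ((t * b.1 + (t * w) * b.2 : ℝ) : ℂ)) ∂ν) :
    ∀ j k : ℕ, ∫ b : ℝ × ℝ, b.1 ^ j * b.2 ^ k ∂μ = ∫ b : ℝ × ℝ, b.1 ^ j * b.2 ^ k ∂ν := by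
  intro j k
  have hpoly : mixedMomentPoly μ (j + k) = mixedMomentPoly ν (j + k) := by
    refine eq_of_infinite_eval_eq _ _ ((Set.Icc_infinite zero_lt_one).mono fun w hw => ?_)
    have hmap := map_fst_add_mul_snd_eq_of_charFun (h · w hw)
    calc (mixedMomentPoly μ (j + k)).eval w
        = ∫ x, x ^ (j + k) ∂(μ.map fun b => b.1 + w * b.2) := by
          rw [eval_mixedMomentPoly (hμm _), integral_map (by fun_prop) (by fun_prop)]
      _ = (mixedMomentPoly ν (j + k)).eval w := by
          rw [hmap, eval_mixedMomentPoly (hνm _), integral_map (by fun_prop) (by fun_prop)]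
  have hcoeff := congrArg (coeff · k) hpoly
  simp only [coeff_mixedMomentPoly _ (Nat.le_add_left k j), Nat.add_sub_cancel] at hcoeff
  exact mul_left_cancel₀ (Nat.cast_ne_zero.mpr (Nat.choose_pos (Nat.le_add_left k j)).ne') hcoeff
end

section
/- Let (Ω, 𝓕, P) be a standard Borel probability space, let B = (B₀, B₁) : Ω → ℝ², W : Ω → ℝ and X : Ω → ℝ^d be measurable, and suppose B and W are conditionally independent given the σ-algebra σ(X). Set Y = B₀ + B₁·W and assume B₀, B₁ and B₁·W are integrable. Then P-almost surely, E[Y | σ(X) ⊔ σ(W)] = E[B₀ | σ(X)] + E[B₁ | σ(X)] · W. -/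
/-!
Conditional independence of `m₁` and `m₂` given `m'` yields `μ[f | m' ⊔ m₂] = μ[f | m']` for every
integrable `m₁`-measurable `f`. Both sides have the same integral over each `A ∩ t` with `A ∈ m'`,
`t ∈ m₂`, and such sets form a π-system generating `m' ⊔ m₂`. On `A ∩ t` this reduces to
`μ[1_t f | m'] = μ[f | m'] μ⟦t | m'⟧`, which holds because `1_A (1_t - μ⟦t | m'⟧)` has vanishing
conditional expectation given `m₁`, and is therefore orthogonal to `f`.

For the theorem, apply this to `B₀` and `B₁`, with `m' = σ(X)`, `m₁ = σ(B)` and `m₂ = σ(W)`.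
The factor `W` is `σ(X) ⊔ σ(W)`-measurable, so it can be pulled out of `E[B₁ W | σ(X) ⊔ σ(W)]`.
-/

open MeasureTheory ProbabilityTheory

namespace MeasurableSpace

variable {Ω : Type*}

lemma isPiSystem_image2_inter (m₁ m₂ : MeasurableSpace Ω) :
    IsPiSystem (Set.image2 (· ∩ ·) {s | MeasurableSet[m₁] s} {t | MeasurableSet[m₂] t}) := by
  rintro _ ⟨s₁, hs₁, t₁, ht₁, rfl⟩ _ ⟨s₂, hs₂, t₂, ht₂, rfl⟩ _
  exact ⟨s₁ ∩ s₂, hs₁.inter hs₂, t₁ ∩ t₂, ht₁.inter ht₂, Set.inter_inter_inter_comm ..⟩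

lemma sup_eq_generateFrom_image2_inter (m₁ m₂ : MeasurableSpace Ω) :
    m₁ ⊔ m₂ = generateFrom
      (Set.image2 (· ∩ ·) {s | MeasurableSet[m₁] s} {t | MeasurableSet[m₂] t}) := by
  refine le_antisymm (sup_le ?_ ?_) (generateFrom_le ?_)
  · exact fun s hs ↦ measurableSet_generateFrom ⟨s, hs, .univ, .univ, Set.inter_univ s⟩
  · exact fun t ht ↦ measurableSet_generateFrom ⟨.univ, .univ, t, ht, Set.univ_inter t⟩
  · rintro _ ⟨s, hs, t, ht, rfl⟩
    exact (le_sup_left (b := m₂) s hs).inter (le_sup_right (a := m₁) t ht)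

end MeasurableSpace

namespace MeasureTheory

variable {Ω E : Type*} [NormedAddCommGroup E] [NormedSpace ℝ E]
  {m mΩ : MeasurableSpace Ω} {μ : Measure Ω}

lemma setIntegral_eq_of_isPiSystem (hm : m ≤ mΩ) {S : Set (Set Ω)}
    (h_eq : m = MeasurableSpace.generateFrom S) (h_pi : IsPiSystem S) {f g : Ω → E}
    (hf : Integrable f μ) (hg : Integrable g μ) (h_univ : ∫ x, f x ∂μ = ∫ x, g x ∂μ)
    (basic : ∀ s ∈ S, ∫ x in s, f x ∂μ = ∫ x in s, g x ∂μ) {s : Set Ω}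
    (hs : MeasurableSet[m] s) : ∫ x in s, f x ∂μ = ∫ x in s, g x ∂μ := by
  induction s, hs using MeasurableSpace.induction_on_inter h_eq h_pi with
  | empty => simp
  | basic s hs => exact basic s hs
  | compl s hs ih =>
    rw [← sub_eq_of_eq_add' (integral_add_compl (hm s hs) hf).symm,
      ← sub_eq_of_eq_add' (integral_add_compl (hm s hs) hg).symm, ih, h_univ]
  | iUnion s hdisj hs ih =>
    rw [integral_iUnion (fun i ↦ hm _ (hs i)) hdisj hf.integrableOn,
      integral_iUnion (fun i ↦ hm _ (hs i)) hdisj hg.integrableOn]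
    exact tsum_congr ih

lemma integral_mul_eq_zero_of_condExp_eq_zero (hm : m ≤ mΩ) [SigmaFinite (μ.trim hm)]
    {φ ψ : Ω → ℝ} (hφ : StronglyMeasurable[m] φ) (hφψ : Integrable (φ * ψ) μ)
    (hψ : Integrable ψ μ) (hψ₀ : μ[ψ | m] =ᵐ[μ] 0) : ∫ x, φ x * ψ x ∂μ = 0 := by
  change ∫ x, (φ * ψ) x ∂μ = 0
  rw [← integral_condExp hm]
  refine integral_eq_zero_of_ae ?_
  filter_upwards [condExp_mul_of_stronglyMeasurable_left hφ hφψ hψ, hψ₀] with x h₁ h₂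
  simp [h₁, h₂]

lemma ae_abs_condExp_indicator_le_one (t : Set Ω) :
    ∀ᵐ x ∂μ, |μ[t.indicator (fun _ ↦ (1 : ℝ)) | m] x| ≤ 1 :=
  ae_bdd_abs_condExp_of_ae_bdd_abs <| ae_of_all _ fun x ↦ by
    by_cases hx : x ∈ t <;> simp [hx]

end MeasureTheory

namespace ProbabilityTheory.CondIndep

variable {Ω : Type*} {m' m₁ m₂ mΩ : MeasurableSpace Ω} [StandardBorelSpace Ω] {hm' : m' ≤ mΩ}
  {μ : Measure Ω} [IsFiniteMeasure μ]

lemma condExp_indicator_sub_condExp_eq_zero (h : CondIndep m' m₁ m₂ hm' μ) (hm₁ : m₁ ≤ mΩ)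
    (hm₂ : m₂ ≤ mΩ) {A t : Set Ω} (hA : MeasurableSet[m'] A) (ht : MeasurableSet[m₂] t) :
    μ[A.indicator (t.indicator (fun _ ↦ 1) - μ⟦t | m'⟧) | m₁] =ᵐ[μ] 0 := by
  set g := μ⟦t | m'⟧
  have hg_int : Integrable g μ := integrable_condExp
  have hind_int : ∀ {s : Set Ω}, MeasurableSet s → Integrable (s.indicator fun _ ↦ (1 : ℝ)) μ :=
    fun hs ↦ (integrable_const 1).indicator hs
  refine (ae_eq_condExp_of_forall_setIntegral_eq hm₁
    (((hind_int (hm₂ t ht)).sub hg_int).indicator (hm' A hA)) (fun _ _ _ ↦ integrableOn_zero) ?_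
    aestronglyMeasurable_zero).symm
  intro s hs _
  have hsg_int : Integrable (s.indicator (fun _ ↦ 1) * g) μ :=
    hg_int.bdd_mul (c := 1) (hind_int (hm₁ s hs)).aestronglyMeasurable
      (ae_of_all _ fun x ↦ by by_cases hx : x ∈ s <;> simp [hx])
  have hψ : s.indicator (t.indicator (fun _ ↦ 1) - g)
      = (s ∩ t).indicator (fun _ ↦ 1) - s.indicator (fun _ ↦ 1) * g := by
    ext x
    by_cases hxs : x ∈ s <;> by_cases hxt : x ∈ t <;> simp [hxs, hxt]
  have hψ₀ : μ[(s ∩ t).indicator (fun _ ↦ 1) - s.indicator (fun _ ↦ 1) * g | m'] =ᵐ[μ] 0 := by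
    filter_upwards [condExp_sub (hind_int ((hm₁ s hs).inter (hm₂ t ht))) hsg_int m',
      condExp_mul_of_stronglyMeasurable_right stronglyMeasurable_condExp hsg_int
        (hind_int (hm₁ s hs)),
      (condIndep_iff m' m₁ m₂ hm' hm₁ hm₂ μ).1 h s t hs ht] with x h₁ h₂ h₃
    simp [h₁, h₂, h₃, g]
  rw [integral_zero, setIntegral_indicator (hm' A hA), Set.inter_comm,
    ← setIntegral_indicator (hm₁ s hs), hψ, ← setIntegral_condExp hm' _ hA]
  · exact (integral_eq_zero_of_ae (ae_restrict_of_ae hψ₀)).symm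
  · exact (hind_int ((hm₁ s hs).inter (hm₂ t ht))).sub hsg_int

lemma condExp_indicator_eq_mul_condExp (h : CondIndep m' m₁ m₂ hm' μ) (hm₁ : m₁ ≤ mΩ)
    (hm₂ : m₂ ≤ mΩ) {f : Ω → ℝ} (hf : StronglyMeasurable[m₁] f) (hf_int : Integrable f μ)
    {t : Set Ω} (ht : MeasurableSet[m₂] t) :
    μ[t.indicator f | m'] =ᵐ[μ] μ[f | m'] * μ⟦t | m'⟧ := by
  set g := μ⟦t | m'⟧
  have hfg_int : Integrable (f * g) μ :=
    hf_int.mul_bdd (c := 1) integrable_condExp.aestronglyMeasurable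
      (ae_abs_condExp_indicator_le_one t)
  refine (ae_eq_condExp_of_forall_setIntegral_eq hm' (hf_int.indicator (hm₂ t ht))
    (fun _ _ _ ↦ ?_) (fun A hA _ ↦ ?_) ?_).symm
  · exact (integrable_condExp.mul_bdd (c := 1) integrable_condExp.aestronglyMeasurable
      (ae_abs_condExp_indicator_le_one t)).integrableOn
  · have h_int : Integrable (A.indicator (t.indicator (fun _ ↦ 1) - g)) μ :=
      (((integrable_const 1).indicator (hm₂ t ht)).sub integrable_condExp).indicator (hm' A hA)
    have h_eq : f * A.indicator (t.indicator (fun _ ↦ 1) - g)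
        = A.indicator (t.indicator f - f * g) := by
      ext x
      by_cases hxA : x ∈ A <;> by_cases hxt : x ∈ t <;> simp [hxA, hxt, mul_sub]
    have h_orth : ∫ x, f x * A.indicator (t.indicator (fun _ ↦ 1) - g) x ∂μ = 0 :=
      integral_mul_eq_zero_of_condExp_eq_zero hm₁ hf
        (h_eq ▸ ((hf_int.indicator (hm₂ t ht)).sub hfg_int).indicator (hm' A hA)) h_int
        (h.condExp_indicator_sub_condExp_eq_zero hm₁ hm₂ hA ht)
    rw [← Pi.mul_def, h_eq, integral_indicator (hm' A hA),
      integral_sub' (hf_int.indicator (hm₂ t ht)).integrableOn hfg_int.integrableOn,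
      sub_eq_zero] at h_orth
    calc ∫ x in A, (μ[f | m'] * g) x ∂μ = ∫ x in A, μ[f * g | m'] x ∂μ :=
          setIntegral_congr_ae (hm' A hA) ((condExp_mul_of_stronglyMeasurable_right
            stronglyMeasurable_condExp hfg_int hf_int).mono fun x hx _ ↦ hx.symm)
      _ = ∫ x in A, (f * g) x ∂μ := setIntegral_condExp hm' hfg_int hA
      _ = ∫ x in A, t.indicator f x ∂μ := h_orth.symm
  · exact (stronglyMeasurable_condExp.mul stronglyMeasurable_condExp).aestronglyMeasurable

lemma setIntegral_inter_condExp (h : CondIndep m' m₁ m₂ hm' μ) (hm₁ : m₁ ≤ mΩ)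
    (hm₂ : m₂ ≤ mΩ) {f : Ω → ℝ} (hf : StronglyMeasurable[m₁] f) (hf_int : Integrable f μ)
    {A t : Set Ω} (hA : MeasurableSet[m'] A) (ht : MeasurableSet[m₂] t) :
    ∫ x in A ∩ t, μ[f | m'] x ∂μ = ∫ x in A ∩ t, f x ∂μ := by
  have h_ind : t.indicator (μ[f | m']) = μ[f | m'] * t.indicator (fun _ ↦ 1) := by
    ext x
    by_cases hx : x ∈ t <;> simp [hx]
  have h_int : Integrable (t.indicator (μ[f | m'])) μ := integrable_condExp.indicator (hm₂ t ht)
  have h_pull : μ[t.indicator (μ[f | m']) | m'] =ᵐ[μ] μ[f | m'] * μ⟦t | m'⟧ := by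
    rw [h_ind]
    exact condExp_mul_of_stronglyMeasurable_left stronglyMeasurable_condExp (h_ind ▸ h_int)
      ((integrable_const 1).indicator (hm₂ t ht))
  calc ∫ x in A ∩ t, μ[f | m'] x ∂μ = ∫ x in A, μ[t.indicator (μ[f | m']) | m'] x ∂μ := by
        rw [setIntegral_condExp hm' h_int hA, setIntegral_indicator (hm₂ t ht)]
    _ = ∫ x in A, μ[t.indicator f | m'] x ∂μ :=
        setIntegral_congr_ae (hm' A hA) ((h_pull.trans
          (h.condExp_indicator_eq_mul_condExp hm₁ hm₂ hf hf_int ht).symm).mono fun x hx _ ↦ hx)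
    _ = ∫ x in A ∩ t, f x ∂μ := by
        rw [setIntegral_condExp hm' (hf_int.indicator (hm₂ t ht)) hA,
          setIntegral_indicator (hm₂ t ht)]

theorem condExp_sup_eq (h : CondIndep m' m₁ m₂ hm' μ) (hm₁ : m₁ ≤ mΩ) (hm₂ : m₂ ≤ mΩ)
    {f : Ω → ℝ} (hf : StronglyMeasurable[m₁] f) (hf_int : Integrable f μ) :
    μ[f | m' ⊔ m₂] =ᵐ[μ] μ[f | m'] :=
  (ae_eq_condExp_of_forall_setIntegral_eq (sup_le hm' hm₂) hf_int
    (fun _ _ _ ↦ integrable_condExp.integrableOn)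
    (fun _ hu _ ↦ setIntegral_eq_of_isPiSystem (sup_le hm' hm₂)
      (MeasurableSpace.sup_eq_generateFrom_image2_inter m' m₂)
      (MeasurableSpace.isPiSystem_image2_inter m' m₂) integrable_condExp hf_int
      (integral_condExp hm')
      (by rintro _ ⟨A, hA, t, ht, rfl⟩; exact h.setIntegral_inter_condExp hm₁ hm₂ hf hf_int hA ht)
      hu)
    (stronglyMeasurable_condExp.mono (le_sup_left : m' ≤ m' ⊔ m₂)).aestronglyMeasurable).symm

end ProbabilityTheory.CondIndep

theorem stmt_13_general
    {Ω : Type*} [MeasurableSpace Ω] [StandardBorelSpace Ω]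
    {P : Measure Ω} [IsProbabilityMeasure P] {d : ℕ}
    {B : Ω → ℝ × ℝ} {W : Ω → ℝ} {X : Ω → (Fin d → ℝ)}
    (hB : Measurable B) (hW : Measurable W) (hX : Measurable X)
    (hCI : CondIndepFun (MeasurableSpace.comap X inferInstance) hX.comap_le B W P)
    (Y : Ω → ℝ) (hY : ∀ ω, Y ω = (B ω).1 + (B ω).2 * W ω)
    (hB0 : Integrable (fun ω => (B ω).1) P)
    (hB1 : Integrable (fun ω => (B ω).2) P)
    (hB1W : Integrable (fun ω => (B ω).2 * W ω) P) :
    P[Y | MeasurableSpace.comap X inferInstance ⊔ MeasurableSpace.comap W inferInstance]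
      =ᵐ[P]
    fun ω => (P[fun ω' => (B ω').1 | MeasurableSpace.comap X inferInstance]) ω
      + (P[fun ω' => (B ω').2 | MeasurableSpace.comap X inferInstance]) ω * W ω := by
  have h_indep := (condIndepFun_iff_condIndep _ hX.comap_le B W P).1 hCI
  have hW_meas : StronglyMeasurable[MeasurableSpace.comap X inferInstance ⊔
      MeasurableSpace.comap W inferInstance] W :=
    (comap_measurable W).stronglyMeasurable.mono le_sup_right
  have hY_eq : Y = (fun ω ↦ (B ω).1) + (fun ω ↦ (B ω).2) * W := funext hY
  filter_upwards [hY_eq ▸ condExp_add hB0 hB1W _,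
    condExp_mul_of_stronglyMeasurable_right hW_meas hB1W hB1,
    h_indep.condExp_sup_eq hB.comap_le hW.comap_le
      (measurable_fst.comp (comap_measurable B)).stronglyMeasurable hB0,
    h_indep.condExp_sup_eq hB.comap_le hW.comap_le
      (measurable_snd.comp (comap_measurable B)).stronglyMeasurable hB1] with ω h₁ h₂ h₃ h₄
  exact h₁.trans (congrArg₂ (· + ·) h₃ (h₂.trans (congrArg (· * W ω) h₄)))

/-- Under conditional independence of `B` and `W` given `σ(X)`, the regression function of
`Y = B₀ + B₁·W` satisfies `E[Y | σ(X) ⊔ σ(W)] = E[B₀ | σ(X)] + E[B₁ | σ(X)] · W` a.s. -/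
theorem stmt_13
    {Ω : Type*} [MeasurableSpace Ω] [StandardBorelSpace Ω] [Nonempty Ω]
    {P : Measure Ω} [IsProbabilityMeasure P] {d : ℕ}
    {B : Ω → ℝ × ℝ} {W : Ω → ℝ} {X : Ω → (Fin d → ℝ)}
    (hB : Measurable B) (hW : Measurable W) (hX : Measurable X)
    (hCI : CondIndepFun (MeasurableSpace.comap X inferInstance) hX.comap_le B W P)
    (Y : Ω → ℝ) (hY : ∀ ω, Y ω = (B ω).1 + (B ω).2 * W ω)
    (hB0 : Integrable (fun ω => (B ω).1) P)
    (hB1 : Integrable (fun ω => (B ω).2) P)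
    (hB1W : Integrable (fun ω => (B ω).2 * W ω) P) :
    P[Y | MeasurableSpace.comap X inferInstance ⊔ MeasurableSpace.comap W inferInstance]
      =ᵐ[P]
    fun ω => (P[fun ω' => (B ω').1 | MeasurableSpace.comap X inferInstance]) ω
      + (P[fun ω' => (B ω').2 | MeasurableSpace.comap X inferInstance]) ω * W ω :=
  stmt_13_general hB hW hX hCI Y hY hB0 hB1 hB1W
end
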